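/- There is a total function f : ω → ω such that deg_s(C_{graph(f)}) is nonzero (C_{graph(f)} has no recursive member) and C_{graph(f)} <_s E_{graph(f)}, i.e., C_{graph(f)} ≤_s E_{graph(f)} but E_{graph(f)} ≰_s C_{graph(f)}. -/

import Mathlib

/-!  Common definitions: mass problems in Baire space, Medvedev reducibility,
enumeration reducibility, trees, and related notions. -/

/-- A Turing functional, given by a monotone partial recursive map taking a
finite initial segment of the oracle and an input to an output value. -/
structure TuringFunctional where
  app : List ℕ × ℕ →. ℕ
  partrec : Partrec app
  mono : ∀ {σ τ : List ℕ} {n y : ℕ}, σ <+: τ → y ∈ app (σ, n) → y ∈ app (τ, n)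

/-- `Φ.Total g f` means that `Φ(g)` is total and equals `f`. -/
def TuringFunctional.Total (Φ : TuringFunctional) (g f : ℕ → ℕ) : Prop :=
  ∀ n, ∃ k, f n ∈ Φ.app ((List.range k).map g, n)

/-- Medvedev reducibility `A ≤ₛ B` between mass problems. -/
def MedvedevLE (A B : Set (ℕ → ℕ)) : Prop :=
  ∃ Φ : TuringFunctional, ∀ g ∈ B, ∃ f, Φ.Total g f ∧ f ∈ A

/-- Medvedev equivalence. -/
def MedvedevEquiv (A B : Set (ℕ → ℕ)) : Prop := MedvedevLE A B ∧ MedvedevLE B A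

/-- The problem of enumerability of `A`: all functions with range `A`. -/
def EProb (A : Set ℕ) : Set (ℕ → ℕ) := {f | Set.range f = A}

/-- The graph of `f`, coded as a set of naturals via the pairing function. -/
def graphSet (f : ℕ → ℕ) : Set ℕ := Set.range fun n => Nat.pair n (f n)

/-- The `e`-th enumeration operator applied to a set `B`:
`x` is enumerated iff for some (code `u` of a) finite list contained in `B`,
the `e`-th partial recursive function halts on `⟨x, u⟩`. -/
def enumOpApply (e : ℕ) (B : Set ℕ) : Set ℕ :=
  {x | ∃ u : ℕ, ((Denumerable.ofNat Nat.Partrec.Code e).eval (Nat.pair x u)).Dom ∧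
        ∀ y ∈ Denumerable.ofNat (List ℕ) u, y ∈ B}

/-- Enumeration reducibility between subsets of `ℕ`. -/
def EnumLE (A B : Set ℕ) : Prop := ∃ e : ℕ, enumOpApply e B = A

/-- Enumeration equivalence. -/
def EnumEquiv (A B : Set ℕ) : Prop := EnumLE A B ∧ EnumLE B A

/-- `A` is recursively enumerable: it is the domain of a partial recursive function. -/
def REset (A : Set ℕ) : Prop := ∃ c : Nat.Partrec.Code, A = {x | (c.eval x).Dom}

/-- `A` is quasiminimal: not r.e., and every total function whose graph
enumeration-reduces to `A` is recursive. -/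
def Quasiminimal (A : Set ℕ) : Prop :=
  ¬ REset A ∧ ∀ f : ℕ → ℕ, EnumLE (graphSet f) A → Computable f

/-- `A` (as a set) has cototal enumeration degree. -/
def CototalDeg (A : Set ℕ) : Prop := ∃ B : Set ℕ, EnumEquiv B A ∧ EnumLE B Bᶜ

/-- The set `K_A = {⟨e,x⟩ : x ∈ Ψ_e(A)}`. -/
def Kset (A : Set ℕ) : Set ℕ := {p | p.unpair.2 ∈ enumOpApply p.unpair.1 A}

/-- The skip of `A`. -/
def skipSet (A : Set ℕ) : Set ℕ := (Kset A)ᶜ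

/-- The recursive join of two subsets of `ℕ`. -/
def joinSet (A B : Set ℕ) : Set ℕ :=
  {n | (n % 2 = 0 ∧ n / 2 ∈ A) ∨ (n % 2 = 1 ∧ n / 2 ∈ B)}

/-- `A` is recursively enumerable in (the characteristic function of) `X`,
i.e. `A ≤ₑ X ⊕ Xᶜ`. -/
def REin (A X : Set ℕ) : Prop := EnumLE A (joinSet X Xᶜ)

/-- Trees: subsets of `ω^{<ω}` closed under initial segments. -/
def IsTree (T : Set (List ℕ)) : Prop := ∀ ⦃σ τ : List ℕ⦄, σ <+: τ → τ ∈ T → σ ∈ T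

/-- A leaf of `T`: a node with no proper extension in `T`. -/
def IsLeaf (T : Set (List ℕ)) (σ : List ℕ) : Prop :=
  σ ∈ T ∧ ∀ τ ∈ T, σ <+: τ → τ = σ

/-- `T` has no leaves. -/
def NoLeaves (T : Set (List ℕ)) : Prop := ∀ σ ∈ T, ¬ IsLeaf T σ

/-- `T` is finitely branching. -/
def FinBranching (T : Set (List ℕ)) : Prop := ∀ σ ∈ T, {n : ℕ | σ ++ [n] ∈ T}.Finite

/-- `[T]`: the set of infinite paths through `T`. -/
def Paths (T : Set (List ℕ)) : Set (ℕ → ℕ) := {f | ∀ n, (List.range n).map f ∈ T}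

/-- A tree coded as a subset of `ℕ`. -/
def codeTree (T : Set (List ℕ)) : Set ℕ := Encodable.encode '' T

/-- `T` is `h`-bounded. -/
def BoundedTree (h : ℕ → ℕ) (T : Set (List ℕ)) : Prop :=
  ∀ σ ∈ T, ∀ i : ℕ, ∀ hi : i < σ.length, σ.get ⟨i, hi⟩ < h i

/-- A uniformly e-pointed tree with respect to functions. -/
def UEPfun (T : Set (List ℕ)) : Prop :=
  IsTree T ∧ FinBranching T ∧ NoLeaves T ∧
    ∃ e : ℕ, ∀ g ∈ Paths T, enumOpApply e (graphSet g) = codeTree T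

/-- A uniformly e-pointed tree with respect to sets (a subtree of `2^{<ω}`). -/
def UEPset (T : Set (List ℕ)) : Prop :=
  IsTree T ∧ (∀ σ ∈ T, ∀ i ∈ σ, i ≤ 1) ∧ NoLeaves T ∧
    ∃ e : ℕ, ∀ g ∈ Paths T, enumOpApply e {n | g n = 1} = codeTree T

/-- Prepend `i` to a function. -/
def consFun (i : ℕ) (f : ℕ → ℕ) : ℕ → ℕ := fun n => Nat.casesOn n i fun m => f m

/-- The mass problem `0⌢A ∪ 1⌢B`, representing the meet of the degrees of `A` and `B`. -/
def meetProb (A B : Set (ℕ → ℕ)) : Set (ℕ → ℕ) := consFun 0 '' A ∪ consFun 1 '' B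

/-- A mass problem has meet-irreducible Medvedev degree: its degree is not the
meet of two strictly larger degrees. -/
def MeetIrred (X : Set (ℕ → ℕ)) : Prop :=
  ¬ ∃ B C : Set (ℕ → ℕ), MedvedevEquiv (meetProb B C) X ∧
      (MedvedevLE X B ∧ ¬ MedvedevLE B X) ∧ (MedvedevLE X C ∧ ¬ MedvedevLE C X)

/-- `σ` is an initial segment of `f`. -/
def strPrefix (σ : List ℕ) (f : ℕ → ℕ) : Prop := (List.range σ.length).map f = σ

/-- A uniform mass problem. -/
def UniformProb (A : Set (ℕ → ℕ)) : Prop :=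
  ∀ σ : List ℕ, (∃ f ∈ A, strPrefix σ f) → MedvedevLE {f | f ∈ A ∧ strPrefix σ f} A

/-- The `{0,1}`-valued diagonally nonrecursive functions. -/
def DNR2 : Set (ℕ → ℕ) :=
  {f | (∀ n, f n ≤ 1) ∧
    ∀ e y : ℕ, y ∈ (Denumerable.ofNat Nat.Partrec.Code e).eval e → f e ≠ y}

/-- `C_A`: injective enumerations of subsets of `A`. -/
def CProb (A : Set ℕ) : Set (ℕ → ℕ) :=
  {f | Function.Injective f ∧ Set.range f ⊆ A}

/-! The function `f` is taken Baire-generic: it avoids countably many nowhere dense sets, one per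
computable function and one per Turing functional. A computable injective `g` with values in the
graph of `f` has unbounded first coordinates, so some cylinder forces `f` to disagree with one of
its values. For a functional `Φ` we feed it the even part `⟨2m, f(2m)⟩` of the graph, a member of
`C_{graph(f)}`, and keep the odd arguments of `f` free: either on some extension `Φ` outputs a pair
`⟨a, b⟩` with `a` odd and beyond the current cylinder, and we extend further by `f(a) = b + 1`, or
it never does, and then it misses `⟨2n+1, f(2n+1)⟩`. Conversely, removing repetitions from an enumeration of an
infinite set is uniform, which gives `C_A ≤ₛ E_A`. -/

open Function Set PiNat Encodable

theorem exists_forall_notMem_of_isNowhereDense {X ι : Type*} [TopologicalSpace X] [BaireSpace X]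
    [Nonempty X] [Countable ι] {S : ι → Set X} (hS : ∀ i, IsNowhereDense (S i)) :
    ∃ x, ∀ i, x ∉ S i := by
  have hU : (⋃ i, S i) ≠ univ := fun h =>
    not_isMeagre_of_isOpen isOpen_univ univ_nonempty (h ▸ isMeagre_iUnion fun i => (hS i).isMeagre)
  simpa [eq_univ_iff_forall] using hU

theorem isNowhereDense_of_forall_cylinder {E : ℕ → Type*} [∀ n, TopologicalSpace (E n)]
    [∀ n, DiscreteTopology (E n)] {S : Set (∀ n, E n)}
    (hS : ∀ x n, ∃ y m, y ∈ cylinder x n ∧ Disjoint (cylinder y m) S) : IsNowhereDense S := by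
  refine eq_empty_iff_forall_notMem.2 fun x hx => ?_
  obtain ⟨_, ⟨z, n, rfl⟩, hxz, hsub⟩ := (isTopologicalBasis_cylinders E).exists_subset_of_mem_open
    hx isOpen_interior
  obtain ⟨y, m, hy, hdisj⟩ := hS x n
  rw [← mem_cylinder_iff_eq.1 hxz] at hsub
  exact (hdisj.symm.closure_left (isOpen_cylinder E y m)).notMem_of_mem_left
    (interior_subset (hsub hy)) (self_mem_cylinder y m)

instance {α σ : Type*} [Primcodable α] [Primcodable σ] : Countable {f : α →. σ // Partrec f} := by
  refine Injective.countable (β := {f : ℕ →. ℕ // Partrec f})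
    (f := fun f => ⟨fun n => ((decode (α := α) n : Option α) : Part α).bind
      fun a => (f.1 a).map encode, Partrec.nat_iff.2 f.2⟩)
    fun f g hfg => Subtype.ext <| funext fun a => ?_
  have := congrFun (congrArg Subtype.val hfg) (encode a)
  simp only [encodek, Part.coe_some, Part.bind_some] at this
  exact Part.ext fun x => by
    simpa [Part.mem_map_iff, encode_injective.eq_iff] using Part.ext_iff.1 this (encode x)

instance : Countable TuringFunctional :=
  Injective.countable (β := {f // Partrec f}) (f := fun Φ => ⟨Φ.app, Φ.partrec⟩) <| by
    rintro ⟨⟩ ⟨⟩ h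
    cases h
    rfl

namespace List

variable {α : Type*} [BEq α] [LawfulBEq α]

theorem eraseDups_append_singleton (l : List α) (a : α) :
    (l ++ [a]).eraseDups = l.eraseDups ++ if a ∈ l then [] else [a] := by
  rw [eraseDups_append]
  split_ifs with ha <;> simp [removeAll, ha, eraseDups_cons]

theorem IsPrefix.eraseDups {l₁ l₂ : List α} (h : l₁ <+: l₂) : l₁.eraseDups <+: l₂.eraseDups := by
  obtain ⟨t, rfl⟩ := h
  rw [eraseDups_append]
  exact prefix_append _ _

theorem nodup_eraseDups (l : List α) : l.eraseDups.Nodup := by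
  induction l using reverseRecOn with
  | nil => exact nodup_nil
  | append_singleton l a ih =>
    rw [eraseDups_append_singleton]
    split_ifs with ha
    · simpa using ih
    · refine nodup_append.2 ⟨ih, nodup_singleton a, ?_⟩
      simpa using fun b hb (hba : b = a) => ha (hba ▸ hb)

theorem eraseDups_eq_foldl (l : List α) :
    l.eraseDups = l.foldl (fun acc a => if a ∈ acc then acc else acc ++ [a]) [] := by
  induction l using reverseRecOn with
  | nil => rfl
  | append_singleton l a ih =>
    rw [eraseDups_append_singleton, foldl_append, ← ih]
    by_cases ha : a ∈ l <;> simp [ha]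

theorem range_prefix_range {k k' : ℕ} (h : k ≤ k') : range k <+: range k' := by
  obtain ⟨d, rfl⟩ := Nat.exists_eq_add_of_le h
  rw [range_add]
  exact prefix_append _ _

end List

theorem Primrec.list_eraseDups {α : Type*} [Primcodable α] [DecidableEq α] :
    Primrec (List.eraseDups : List α → List α) := by
  have hstep : Primrec₂ fun (acc : List α) (a : α) => if a ∈ acc then acc else acc ++ [a] :=
    Primrec.ite (((PrimrecRel.exists_mem_list Primrec.eq).comp Primrec.fst Primrec.snd).of_eq
      fun _ => by simp) Primrec.fst (Primrec.list_concat.comp Primrec.fst Primrec.snd)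
  exact (Primrec.list_foldl Primrec.id (Primrec.const [])
    (hstep.comp (Primrec.fst.comp Primrec.snd) (Primrec.snd.comp Primrec.snd)).to₂).of_eq
    fun l => (List.eraseDups_eq_foldl l).symm

theorem List.exists_getElem_eq_of_prefix_mono {α : Type*} {D : ℕ → List α}
    (hD : ∀ ⦃k k'⦄, k ≤ k' → D k <+: D k') (hlen : ∀ n, ∃ k, n < (D k).length) :
    ∃ h : ℕ → α, ∀ k n (hn : n < (D k).length), (D k)[n] = h n := by
  choose K hK using hlen
  refine ⟨fun n => (D (K n))[n]'(hK n), fun k n hn => ?_⟩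
  rcases le_total k (K n) with hk | hk
  · exact (hD hk).getElem hn
  · exact ((hD hk).getElem (hK n)).symm

theorem exists_lt_length_eraseDups_map_range {g : ℕ → ℕ} (hg : (range g).Infinite) (n : ℕ) :
    ∃ k, n < ((List.range k).map g).eraseDups.length := by
  classical
  obtain ⟨S, hSg, hS⟩ := hg.exists_subset_card_eq (n + 1)
  obtain ⟨s, -, rfl⟩ := Finset.subset_set_image_iff.1 (image_univ (f := g) ▸ hSg)
  obtain ⟨k, hk⟩ := Finset.exists_nat_subset_range s
  refine ⟨k, ?_⟩
  have hlen : ((List.range k).map g).eraseDups.length = ((Finset.range k).image g).card := by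
    rw [← List.toFinset_card_of_nodup (List.nodup_eraseDups _)]
    congr 1
    ext x
    simp
  rw [hlen, Nat.lt_iff_add_one_le, ← hS]
  exact Finset.card_le_card (Finset.image_subset_image hk)

def dedupFunctional : TuringFunctional where
  app p := (p.1.eraseDups[p.2]? : Part ℕ)
  partrec := Computable.ofOption
    (Primrec.list_getElem?.comp (Primrec.list_eraseDups.comp .fst) .snd).to_comp
  mono {σ τ n y} hστ hy := by
    rw [Part.mem_ofOption] at hy ⊢
    obtain ⟨hn, rfl⟩ := List.getElem?_eq_some_iff.1 hy
    rw [hστ.eraseDups.getElem hn]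
    exact List.getElem?_eq_getElem _

theorem medvedevLE_cProb_eProb {A : Set ℕ} (hA : A.Infinite) : MedvedevLE (CProb A) (EProb A) := by
  refine ⟨dedupFunctional, fun g (hg : range g = A) => ?_⟩
  set D : ℕ → List ℕ := fun k => ((List.range k).map g).eraseDups
  have hlen (n : ℕ) : ∃ k, n < (D k).length := exists_lt_length_eraseDups_map_range (hg ▸ hA) n
  obtain ⟨h, hDh⟩ := List.exists_getElem_eq_of_prefix_mono
    (fun k k' hk => ((List.range_prefix_range hk).map g).eraseDups) hlen
  refine ⟨h, fun n => ?_, fun n m hnm => ?_, ?_⟩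
  · obtain ⟨k, hk⟩ := hlen n
    exact ⟨k, Part.mem_ofOption.2 (List.getElem?_eq_some_iff.2 ⟨hk, hDh k n hk⟩)⟩
  · obtain ⟨k, hk⟩ := hlen (max n m)
    have hn : n < (D k).length := by omega
    have hm : m < (D k).length := by omega
    rw [← hDh k n hn, ← hDh k m hm] at hnm
    exact (List.nodup_eraseDups _).getElem_inj_iff.1 hnm
  · rintro _ ⟨n, rfl⟩
    obtain ⟨k, hk⟩ := hlen n
    obtain ⟨i, -, hi⟩ := List.mem_map.1 (List.mem_eraseDups.1 (hDh k n hk ▸ List.getElem_mem hk))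
    exact hg ▸ ⟨i, hi⟩

theorem mem_graphSet_iff {f : ℕ → ℕ} {z : ℕ} : z ∈ graphSet f ↔ f z.unpair.1 = z.unpair.2 := by
  refine ⟨?_, fun h => ⟨z.unpair.1, (congrArg _ h).trans (Nat.pair_unpair z)⟩⟩
  rintro ⟨n, rfl⟩
  simp

theorem graphSet_infinite (f : ℕ → ℕ) : (graphSet f).Infinite :=
  infinite_range_of_injective fun _ _ h => (Nat.pair_eq_pair.1 h).1

def evenGraph (f : ℕ → ℕ) (m : ℕ) : ℕ := Nat.pair (2 * m) (f (2 * m))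

theorem evenGraph_mem_cProb (f : ℕ → ℕ) : evenGraph f ∈ CProb (graphSet f) :=
  ⟨fun _ _ h => by simpa using (Nat.pair_eq_pair.1 h).1, by rintro _ ⟨m, rfl⟩; exact ⟨2 * m, rfl⟩⟩

theorem TuringFunctional.Total.eq_of_mem {Φ : TuringFunctional} {g h : ℕ → ℕ} (hΦ : Φ.Total g h)
    {k n y : ℕ} (hy : y ∈ Φ.app ((List.range k).map g, n)) : h n = y := by
  obtain ⟨k', hk'⟩ := hΦ n
  have hpre {j : ℕ} (hj : j ≤ max k k') := (List.range_prefix_range hj).map g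
  exact Part.mem_unique (Φ.mono (hpre (le_max_right k k')) hk')
    (Φ.mono (hpre (le_max_left k k')) hy)

theorem isNowhereDense_setOf_mem_cProb_graphSet (g : ℕ → ℕ) :
    IsNowhereDense {f | g ∈ CProb (graphSet f)} := by
  refine isNowhereDense_of_forall_cylinder fun x n => ?_
  by_cases hbig : ∃ z ∈ range g, n ≤ z.unpair.1
  · obtain ⟨z, hzg, hz⟩ := hbig
    refine ⟨update x z.unpair.1 (z.unpair.2 + 1), z.unpair.1 + 1,
      fun j hj => update_of_ne (by omega) _ _, disjoint_left.2 fun f hf ⟨_, hg⟩ => ?_⟩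
    have hfz : f z.unpair.1 = z.unpair.2 + 1 := by simpa using hf _ (Nat.lt_succ_self _)
    have := mem_graphSet_iff.1 (hg hzg)
    omega
  · refine ⟨x, 0, self_mem_cylinder x n, disjoint_left.2 fun f _ ⟨hinj, hg⟩ => ?_⟩
    refine infinite_range_of_injective hinj
      (((finite_Iio n).image fun a => Nat.pair a (f a)).subset fun z hz => ?_)
    exact ⟨z.unpair.1, not_le.1 fun h => hbig ⟨z, hz, h⟩,
      (congrArg _ (mem_graphSet_iff.1 (hg hz))).trans (Nat.pair_unpair z)⟩

theorem isNowhereDense_setOf_total_evenGraph_mem_eProb (Φ : TuringFunctional) :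
    IsNowhereDense {f | ∃ h, Φ.Total (evenGraph f) h ∧ h ∈ EProb (graphSet f)} := by
  refine isNowhereDense_of_forall_cylinder fun x n => ?_
  by_cases hout : ∃ f₀ ∈ cylinder x n, ∃ k j z,
      z ∈ Φ.app ((List.range k).map (evenGraph f₀), j) ∧ Odd z.unpair.1 ∧ n ≤ z.unpair.1
  · obtain ⟨f₀, hf₀, k, j, z, hz, hodd, hn⟩ := hout
    refine ⟨update f₀ z.unpair.1 (z.unpair.2 + 1), max (2 * k) (z.unpair.1 + 1),
      fun i hi => (update_of_ne (by omega) _ _).trans (hf₀ i hi),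
      disjoint_left.2 fun f hf ⟨h, hΦ, hh⟩ => ?_⟩
    have hfz : f z.unpair.1 = z.unpair.2 + 1 := by simpa using hf z.unpair.1 (by omega)
    have hagree : (List.range k).map (evenGraph f₀) = (List.range k).map (evenGraph f) :=
      List.map_congr_left fun i hi => by
        have hne : 2 * i ≠ z.unpair.1 := fun h => Nat.not_even_iff_odd.2 hodd ⟨i, by omega⟩
        simp only [List.mem_range] at hi
        simp [evenGraph, hf (2 * i) (by omega), update_of_ne hne]
    have hzf : z ∈ graphSet f := hh ▸ ⟨j, hΦ.eq_of_mem (hagree ▸ hz)⟩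
    have := mem_graphSet_iff.1 hzf
    omega
  · refine ⟨x, n, self_mem_cylinder x n, disjoint_left.2 fun f hf ⟨h, hΦ, hh⟩ => hout ?_⟩
    obtain ⟨j, hj⟩ : Nat.pair (2 * n + 1) (f (2 * n + 1)) ∈ range h := hh ▸ ⟨_, rfl⟩
    obtain ⟨k, hk⟩ := hΦ j
    exact ⟨f, hf, k, j, h j, hk, by simp [hj], by simp [hj]; omega⟩

/-- There is a total `f` such that `C_{graph(f)}` has no recursive member and
`C_{graph(f)} <ₛ E_{graph(f)}`. -/
theorem stmt6 :
    ∃ f : ℕ → ℕ,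
      (¬ ∃ g ∈ CProb (graphSet f), Computable g) ∧
      MedvedevLE (CProb (graphSet f)) (EProb (graphSet f)) ∧
      ¬ MedvedevLE (EProb (graphSet f)) (CProb (graphSet f)) := by
  obtain ⟨f, hf⟩ := exists_forall_notMem_of_isNowhereDense
    (S := Sum.elim (fun g : {g : ℕ → ℕ // Computable g} => {f | g.1 ∈ CProb (graphSet f)})
      fun Φ : TuringFunctional => {f | ∃ h, Φ.Total (evenGraph f) h ∧ h ∈ EProb (graphSet f)})
    (Sum.rec (fun g => isNowhereDense_setOf_mem_cProb_graphSet g.1)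
      isNowhereDense_setOf_total_evenGraph_mem_eProb)
  refine ⟨f, ?_, medvedevLE_cProb_eProb (graphSet_infinite f), ?_⟩
  · rintro ⟨g, hgC, hg⟩
    exact hf (.inl ⟨g, hg⟩) hgC
  · rintro ⟨Φ, hΦ⟩
    exact hf (.inr Φ) (hΦ _ (evenGraph_mem_cProb f))
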